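/- arXiv:1506.06531 — 4 statements merged into one kernel-verified Lean document; each statement's English description precedes it below -/
import Mathlib

section
/- The unique formal power series solution σ(t) of the σ-Painlevé V equation (tσ'')² + 4(tσ' − σ)(tσ' − σ + (σ')²) = 0 with σ(t) = −(ξ/π)t − (ξ²/π²)t² + O(t³) has third-order coefficient −ξ³/π³ and fourth-order coefficient (1/24)(8ξ²/(3π²) − 24ξ⁴/π⁴). -/
open Real PowerSeries

set_option maxHeartbeats 1600000 in
/-- The unique formal power series solution `σ(t) = ∑_{n≥1} aₙ tⁿ` of the σ-Painlevé V
equation `(tσ'')² + 4(tσ' − σ)(tσ' − σ + (σ')²) = 0` with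
`a₁ = −ξ/π`, `a₂ = −ξ²/π²` (and `ξ ≠ 0`) has
`a₃ = −ξ³/π³` and `a₄ = (1/24)(8ξ²/(3π²) − 24ξ⁴/π⁴)`. -/
theorem sigmaPV_coeff_three_four (ξ : ℝ) (hξ : ξ ≠ 0) (σ : PowerSeries ℝ)
    (h0 : PowerSeries.coeff (R := ℝ) 0 σ = 0)
    (h1 : PowerSeries.coeff (R := ℝ) 1 σ = -ξ / Real.pi)
    (h2 : PowerSeries.coeff (R := ℝ) 2 σ = -ξ ^ 2 / Real.pi ^ 2)
    (heq :
      (PowerSeries.X * PowerSeries.derivative (R := ℝ) (PowerSeries.derivative (R := ℝ) σ)) ^ 2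
        + 4 * (PowerSeries.X * PowerSeries.derivative (R := ℝ) σ - σ)
          * (PowerSeries.X * PowerSeries.derivative (R := ℝ) σ - σ
              + (PowerSeries.derivative (R := ℝ) σ) ^ 2) = 0) :
    PowerSeries.coeff (R := ℝ) 3 σ = -ξ ^ 3 / Real.pi ^ 3 ∧
    PowerSeries.coeff (R := ℝ) 4 σ =
      (1 / 24) * (8 * ξ ^ 2 / (3 * Real.pi ^ 2) - 24 * ξ ^ 4 / Real.pi ^ 4) := by
  rw [show (4 : PowerSeries ℝ) = PowerSeries.C (R := ℝ) 4 from (map_ofNat (PowerSeries.C (R := ℝ)) 4).symm] at heq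
  have hπ := Real.pi_ne_zero
  have e3 := congrArg (PowerSeries.coeff (R := ℝ) 3) heq
  simp only [pow_two, PowerSeries.coeff_mul, Finset.Nat.sum_antidiagonal_eq_sum_range_succ_mk,
    Finset.sum_range_succ, Finset.sum_range_zero, PowerSeries.coeff_derivative,
    PowerSeries.coeff_X, PowerSeries.coeff_C, map_add, map_sub, map_zero,
    PowerSeries.coeff_zero_eq_constantCoeff, h0, h1, h2] at e3
  norm_num at e3
  field_simp at e3
  ring_nf at e3
  have key3 : PowerSeries.coeff (R := ℝ) 3 σ * Real.pi ^ 3 = -ξ ^ 3 := by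
    apply mul_left_cancel₀ (a := 16 * ξ ^ 2 * Real.pi ^ 11) (by positivity)
    linear_combination (-Real.pi ^ 11) * e3
  have ha3 : PowerSeries.coeff (R := ℝ) 3 σ = -ξ ^ 3 / Real.pi ^ 3 := by
    field_simp
    linear_combination key3
  have e4 := congrArg (PowerSeries.coeff (R := ℝ) 4) heq
  simp only [pow_two, PowerSeries.coeff_mul, Finset.Nat.sum_antidiagonal_eq_sum_range_succ_mk,
    Finset.sum_range_succ, Finset.sum_range_zero, PowerSeries.coeff_derivative,
    PowerSeries.coeff_X, PowerSeries.coeff_C, map_add, map_sub, map_zero,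
    PowerSeries.coeff_zero_eq_constantCoeff, h0, h1, h2, ha3] at e4
  norm_num at e4
  field_simp at e4
  ring_nf at e4
  have key4 : PowerSeries.coeff (R := ℝ) 4 σ * Real.pi ^ 4 = ξ ^ 2 * Real.pi ^ 2 / 9 - ξ ^ 4 := by
    apply mul_left_cancel₀ (a := 36 * ξ ^ 2 * Real.pi ^ 38) (by positivity)
    linear_combination (-Real.pi ^ 38) * e4
  refine ⟨ha3, ?_⟩
  field_simp
  linear_combination 72 * key4
end

section
/- If a formal power series σ(t) = ∑_{n≥1} a_n tⁿ satisfies (tσ'')² + 4(tσ' − σ)(tσ' − σ + (σ')²) = 0 with a₁ = −ξ/π ≠ 0 and a₂ = −ξ²/π², then all coefficients a_n for n ≥ 3 are uniquely determined by a₁ and a₂. -/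
open Real PowerSeries

private lemma coeff_mul_single (f g : PowerSeries ℝ) (m l : ℕ)
    (hf : ∀ k < m, PowerSeries.coeff (R := ℝ) k f = 0)
    (hg : ∀ k < l, PowerSeries.coeff (R := ℝ) k g = 0) :
    PowerSeries.coeff (R := ℝ) (m + l) (f * g)
      = PowerSeries.coeff (R := ℝ) m f * PowerSeries.coeff (R := ℝ) l g := by
  rw [PowerSeries.coeff_mul]
  apply Finset.sum_eq_single (m, l)
  · rintro ⟨i, j⟩ hij hne
    rw [Finset.HasAntidiagonal.mem_antidiagonal] at hij
    rcases lt_or_ge i m with h | h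
    · rw [hf i h, zero_mul]
    · have hj : j < l := by
        rcases lt_or_ge j l with h' | h'
        · exact h'
        · exfalso; apply hne
          have : i = m := by omega
          have : j = l := by omega
          simp_all
      rw [hg j hj, mul_zero]
  · intro h
    simp at h

private lemma coeff_mul_zero (f g : PowerSeries ℝ) (m l n : ℕ) (hn : n < m + l)
    (hf : ∀ k < m, PowerSeries.coeff (R := ℝ) k f = 0)
    (hg : ∀ k < l, PowerSeries.coeff (R := ℝ) k g = 0) :
    PowerSeries.coeff (R := ℝ) n (f * g) = 0 := by
  rw [PowerSeries.coeff_mul]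
  apply Finset.sum_eq_zero
  rintro ⟨i, j⟩ hij
  rw [Finset.HasAntidiagonal.mem_antidiagonal] at hij
  rcases lt_or_ge i m with h | h
  · rw [hf i h, zero_mul]
  · rw [hg j (by omega), mul_zero]

/-- Uniqueness of the formal power series solution of the σ-Painlevé V equation
`(tσ'')² + 4(tσ' − σ)(tσ' − σ + (σ')²) = 0`: if two formal power series with zero
constant term both satisfy the equation and have the same first two coefficients
`a₁ = −ξ/π ≠ 0` and `a₂ = −ξ²/π²`, then they are equal (i.e. all coefficients
`aₙ`, `n ≥ 3`, are uniquely determined by `a₁` and `a₂`). -/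
theorem sigmaPV_series_unique (ξ : ℝ) (hξ : -ξ / Real.pi ≠ 0)
    (σ τ : PowerSeries ℝ)
    (hσ0 : PowerSeries.coeff (R := ℝ) 0 σ = 0)
    (hσ1 : PowerSeries.coeff (R := ℝ) 1 σ = -ξ / Real.pi)
    (hσ2 : PowerSeries.coeff (R := ℝ) 2 σ = -ξ ^ 2 / Real.pi ^ 2)
    (hτ0 : PowerSeries.coeff (R := ℝ) 0 τ = 0)
    (hτ1 : PowerSeries.coeff (R := ℝ) 1 τ = -ξ / Real.pi)
    (hτ2 : PowerSeries.coeff (R := ℝ) 2 τ = -ξ ^ 2 / Real.pi ^ 2)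
    (heqσ :
      (PowerSeries.X * PowerSeries.derivative (R := ℝ) (PowerSeries.derivative (R := ℝ) σ)) ^ 2
        + 4 * (PowerSeries.X * PowerSeries.derivative (R := ℝ) σ - σ)
          * (PowerSeries.X * PowerSeries.derivative (R := ℝ) σ - σ
              + (PowerSeries.derivative (R := ℝ) σ) ^ 2) = 0)
    (heqτ :
      (PowerSeries.X * PowerSeries.derivative (R := ℝ) (PowerSeries.derivative (R := ℝ) τ)) ^ 2
        + 4 * (PowerSeries.X * PowerSeries.derivative (R := ℝ) τ - τ)
          * (PowerSeries.X * PowerSeries.derivative (R := ℝ) τ - τ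
              + (PowerSeries.derivative (R := ℝ) τ) ^ 2) = 0) :
    σ = τ := by
  classical
  by_contra hne
  have hex : ∃ n, PowerSeries.coeff (R := ℝ) n σ ≠ PowerSeries.coeff (R := ℝ) n τ := by
    by_contra h
    push_neg at h
    exact hne (PowerSeries.ext h)
  obtain ⟨n, hn, hlt⟩ :
      ∃ n, (PowerSeries.coeff (R := ℝ) n σ ≠ PowerSeries.coeff (R := ℝ) n τ)
        ∧ ∀ k < n, PowerSeries.coeff (R := ℝ) k σ = PowerSeries.coeff (R := ℝ) k τ :=
    ⟨Nat.find hex, Nat.find_spec hex, fun k hk => by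
      have := Nat.find_min hex hk
      push_neg at this
      exact this⟩
  have h3 : 3 ≤ n := by
    by_contra h
    push_neg at h
    interval_cases n
    · exact hn (hσ0.trans hτ0.symm)
    · exact hn (hσ1.trans hτ1.symm)
    · exact hn (hσ2.trans hτ2.symm)
  obtain ⟨m, rfl⟩ : ∃ m, n = m + 3 := ⟨n - 3, by omega⟩
  set D := PowerSeries.derivative (R := ℝ) with hD
  set f1 : PowerSeries ℝ := PowerSeries.X * D (D σ) - PowerSeries.X * D (D τ) with hf1
  set g1 : PowerSeries ℝ := PowerSeries.X * D (D σ) + PowerSeries.X * D (D τ) with hg1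
  set f2 : PowerSeries ℝ :=
    (PowerSeries.X * D σ - σ) - (PowerSeries.X * D τ - τ) with hf2
  set g2 : PowerSeries ℝ :=
    4 * ((PowerSeries.X * D σ - σ) + (PowerSeries.X * D τ - τ) + (D σ) ^ 2) with hg2
  set f3 : PowerSeries ℝ := D σ - D τ with hf3
  set g3 : PowerSeries ℝ := (PowerSeries.X * D τ - τ) * (4 * (D σ + D τ)) with hg3
  have hid : f1 * g1 + f2 * g2 + f3 * g3 = 0 := by
    rw [hf1, hg1, hf2, hg2, hf3, hg3]
    linear_combination heqσ - heqτ
  -- coefficient facts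
  have hcf1 : ∀ k < m + 2, PowerSeries.coeff (R := ℝ) k f1 = 0 := by
    intro k hk
    rw [hf1, map_sub]
    cases k with
    | zero => simp [PowerSeries.coeff_zero_X_mul]
    | succ k =>
      rw [PowerSeries.coeff_succ_X_mul, PowerSeries.coeff_succ_X_mul,
        PowerSeries.coeff_derivative, PowerSeries.coeff_derivative,
        PowerSeries.coeff_derivative, PowerSeries.coeff_derivative,
        hlt (k + 1 + 1) (by omega)]
      ring
  have hcg1 : ∀ k < 1, PowerSeries.coeff (R := ℝ) k g1 = 0 := by
    intro k hk
    interval_cases k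
    rw [hg1, map_add]
    simp [PowerSeries.coeff_zero_X_mul]
  have hcf2 : ∀ k < m + 3, PowerSeries.coeff (R := ℝ) k f2 = 0 := by
    intro k hk
    rw [hf2, map_sub, map_sub, map_sub]
    cases k with
    | zero =>
      simp [PowerSeries.coeff_zero_X_mul, hσ0, hτ0]
    | succ k =>
      rw [PowerSeries.coeff_succ_X_mul, PowerSeries.coeff_succ_X_mul,
        PowerSeries.coeff_derivative, PowerSeries.coeff_derivative,
        hlt (k + 1) (by omega)]
      ring
  have hcf3 : ∀ k < m + 2, PowerSeries.coeff (R := ℝ) k f3 = 0 := by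
    intro k hk
    rw [hf3, map_sub, PowerSeries.coeff_derivative, PowerSeries.coeff_derivative,
      hlt (k + 1) (by omega)]
    ring
  have hcg3 : ∀ k < 2, PowerSeries.coeff (R := ℝ) k g3 = 0 := by
    intro k hk
    rw [hg3]
    apply coeff_mul_zero _ _ 2 0 k (by omega)
    · intro j hj
      interval_cases j
      · rw [map_sub, PowerSeries.coeff_zero_X_mul, hτ0]; ring
      · rw [map_sub, PowerSeries.coeff_succ_X_mul, PowerSeries.coeff_derivative, hτ1]
        push_cast
        ring
    · intro j hj
      omega
  -- take coefficient (m+3) of the identity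
  have h0 := congrArg (PowerSeries.coeff (R := ℝ) (m + 3)) hid
  rw [map_zero, map_add, map_add] at h0
  have ht1 : PowerSeries.coeff (R := ℝ) (m + 3) (f1 * g1)
      = PowerSeries.coeff (R := ℝ) (m + 2) f1 * PowerSeries.coeff (R := ℝ) 1 g1 :=
    coeff_mul_single f1 g1 (m + 2) 1 hcf1 hcg1
  have ht2 : PowerSeries.coeff (R := ℝ) (m + 3) (f2 * g2)
      = PowerSeries.coeff (R := ℝ) (m + 3) f2 * PowerSeries.coeff (R := ℝ) 0 g2 := by
    have := coeff_mul_single f2 g2 (m + 3) 0 hcf2 (fun k hk => by omega)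
    simpa using this
  have ht3 : PowerSeries.coeff (R := ℝ) (m + 3) (f3 * g3) = 0 :=
    coeff_mul_zero f3 g3 (m + 2) 2 (m + 3) (by omega) hcf3 hcg3
  -- evaluate the surviving coefficients
  set c : ℝ := -ξ / Real.pi with hc
  set d : ℝ := PowerSeries.coeff (R := ℝ) (m + 3) σ - PowerSeries.coeff (R := ℝ) (m + 3) τ with hd2
  have hcsq : c ^ 2 = ξ ^ 2 / Real.pi ^ 2 := by rw [hc]; ring
  have hv1 : PowerSeries.coeff (R := ℝ) (m + 2) f1 = d * (m + 3) * (m + 2) := by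
    rw [hf1, map_sub]
    rw [show m + 2 = (m + 1) + 1 from rfl, PowerSeries.coeff_succ_X_mul,
      PowerSeries.coeff_succ_X_mul, PowerSeries.coeff_derivative,
      PowerSeries.coeff_derivative, PowerSeries.coeff_derivative,
      PowerSeries.coeff_derivative, hd2]
    push_cast
    ring
  have hv2 : PowerSeries.coeff (R := ℝ) 1 g1 = -4 * c ^ 2 := by
    rw [hg1, map_add, show (1 : ℕ) = 0 + 1 from rfl, PowerSeries.coeff_succ_X_mul,
      PowerSeries.coeff_succ_X_mul, PowerSeries.coeff_derivative,
      PowerSeries.coeff_derivative, PowerSeries.coeff_derivative,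
      PowerSeries.coeff_derivative, hσ2, hτ2, hcsq]
    push_cast
    ring
  have hv3 : PowerSeries.coeff (R := ℝ) (m + 3) f2 = d * (m + 2) := by
    rw [hf2, map_sub, map_sub, map_sub, show m + 3 = (m + 2) + 1 from rfl,
      PowerSeries.coeff_succ_X_mul, PowerSeries.coeff_succ_X_mul,
      PowerSeries.coeff_derivative, PowerSeries.coeff_derivative, hd2]
    push_cast
    ring
  have hv4 : PowerSeries.coeff (R := ℝ) 0 g2 = 4 * c ^ 2 := by
    rw [hg2]
    have h4 : (4 : PowerSeries ℝ) * ((PowerSeries.X * D σ - σ)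
        + (PowerSeries.X * D τ - τ) + (D σ) ^ 2)
        = ((PowerSeries.X * D σ - σ) + (PowerSeries.X * D τ - τ) + (D σ) * (D σ)) * 4 := by
      ring
    rw [h4]
    have := coeff_mul_single ((PowerSeries.X * D σ - σ) + (PowerSeries.X * D τ - τ)
        + (D σ) * (D σ)) 4 0 0 (fun k hk => by omega) (fun k hk => by omega)
    rw [show (0 : ℕ) + 0 = 0 from rfl] at this
    rw [this]
    have hDD : PowerSeries.coeff (R := ℝ) 0 ((D σ) * (D σ))
        = PowerSeries.coeff (R := ℝ) 0 (D σ) * PowerSeries.coeff (R := ℝ) 0 (D σ) := by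
      have := coeff_mul_single (D σ) (D σ) 0 0 (fun k hk => by omega) (fun k hk => by omega)
      exact this
    rw [map_add, map_add, map_sub, map_sub, PowerSeries.coeff_zero_X_mul,
      PowerSeries.coeff_zero_X_mul, hσ0, hτ0, hDD, PowerSeries.coeff_derivative, hσ1]
    have h4c : PowerSeries.coeff (R := ℝ) 0 (4 : PowerSeries ℝ) = 4 := by
      rw [PowerSeries.coeff_zero_eq_constantCoeff]; exact map_ofNat _ 4
    rw [h4c, hcsq]
    push_cast
    ring
  rw [ht1, ht2, ht3, hv1, hv2, hv3, hv4] at h0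
  -- conclude d = 0, contradiction
  have hdne : d ≠ 0 := sub_ne_zero.mpr hn
  have hkey : c ^ 2 * ((m : ℝ) + 2) ^ 2 * d = 0 := by
    linear_combination (-(1 : ℝ) / 4) * h0
  have hcne : c ^ 2 * ((m : ℝ) + 2) ^ 2 ≠ 0 :=
    mul_ne_zero (pow_ne_zero 2 hξ) (pow_ne_zero 2 (by positivity))
  exact hdne ((mul_eq_zero.mp hkey).resolve_left hcne)
end

section
/- If σ⁰ satisfies the σPV equation (tσ'')² + 4(tσ' − σ)(tσ' − σ + (σ')²) = 0 and σ⁰(s) = −s²/4 − 1/4 + o(s²) with appropriate derivative asymptotics, then any solution σ¹ of the linear equation A y'' + B y' + C y = D of Proposition 1 (coefficients built from σ⁰) satisfying y(s) = O(s⁴) must have leading asymptotics σ¹(s) = −s⁴/48 + O(s²) as s → ∞. -/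
open Real Filter Asymptotics
open scoped Topology

private lemma powO {m n : ℕ} (h : m ≤ n) :
    (fun s : ℝ => s ^ m) =O[Filter.atTop] fun s : ℝ => s ^ n := by
  apply Asymptotics.IsBigO.of_bound 1
  filter_upwards [Filter.eventually_ge_atTop (1 : ℝ)] with s hs
  simp only [Real.norm_eq_abs, one_mul, abs_pow]
  exact pow_le_pow_right₀ (le_trans hs (le_abs_self s)) h

private lemma mulO1 {u v : ℝ → ℝ}
    (hu : u =O[Filter.atTop] fun _ : ℝ => (1 : ℝ))
    (hv : v =O[Filter.atTop] fun _ : ℝ => (1 : ℝ)) :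
    (fun s => u s * v s) =O[Filter.atTop] fun _ : ℝ => (1 : ℝ) := by
  simpa using hu.mul hv

private lemma termO (C : ℝ) {p q n : ℕ} {u v : ℝ → ℝ}
    (hu : u =O[Filter.atTop] fun _ : ℝ => (1 : ℝ))
    (hv : v =O[Filter.atTop] fun s : ℝ => s ^ q) (h : p + q ≤ n) :
    (fun s => C * (s ^ p * (u s * v s))) =O[Filter.atTop] fun s : ℝ => s ^ n := by
  have h1 : (fun s : ℝ => s ^ p * (u s * v s))
      =O[Filter.atTop] fun s : ℝ => s ^ p * (1 * s ^ q) :=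
    (Asymptotics.isBigO_refl _ _).mul (hu.mul hv)
  have h2 : (fun s : ℝ => s ^ p * (1 * s ^ q)) =O[Filter.atTop] fun s : ℝ => s ^ n := by
    simpa [← pow_add] using powO h
  exact (h1.trans h2).const_mul_left C

private lemma divO (g : ℝ → ℝ) (k m : ℕ)
    (h : (fun s => s ^ k * g s) =O[Filter.atTop] fun s : ℝ => s ^ (k + m)) :
    g =O[Filter.atTop] fun s : ℝ => s ^ m := by
  rw [Asymptotics.isBigO_iff] at h ⊢
  obtain ⟨C, hC⟩ := h
  refine ⟨C, ?_⟩
  filter_upwards [hC, Filter.eventually_ge_atTop (1 : ℝ)] with s h1 h2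
  have hs0 : (0 : ℝ) < s := lt_of_lt_of_le one_pos h2
  have hsk : (0 : ℝ) < s ^ k := pow_pos hs0 k
  simp only [Real.norm_eq_abs, pow_add, abs_mul, abs_pow, abs_of_pos hs0] at h1 ⊢
  have h3 : s ^ k * |g s| ≤ s ^ k * (C * s ^ m) := by nlinarith [h1]
  exact le_of_mul_le_mul_left h3 hsk

private lemma atomO {f : ℝ → ℝ} (k : ℕ)
    (hf : f =O[Filter.atTop] fun s : ℝ => 1 / s ^ k) :
    (fun s : ℝ => s ^ k * f s) =O[Filter.atTop] fun _ : ℝ => (1 : ℝ) := by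
  have h1 : (fun s : ℝ => s ^ k * f s)
      =O[Filter.atTop] fun s : ℝ => s ^ k * (1 / s ^ k) :=
    (Asymptotics.isBigO_refl _ _).mul hf
  refine h1.trans (Filter.EventuallyEq.isBigO ?_)
  filter_upwards [Filter.eventually_gt_atTop (0 : ℝ)] with s hs
  field_simp

set_option maxHeartbeats 2000000 in
/-- If `σ⁰` satisfies the σ-Painlevé V equation with
`σ⁰(s) = −s²/4 − 1/4 + O(1/s²)` (and the corresponding derivative asymptotics
`σ⁰'(s) = −s/2 + O(1/s³)`, `σ⁰''(s) = −1/2 + O(1/s⁴)`), then any solution `y = σ¹` of the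
linear equation `A y'' + B y' + C y = D` of Proposition 1 (coefficients built from `σ⁰`)
with `y(s) = O(s⁴)` (and `y' = O(s³)`, `y'' = O(s²)`) satisfies
`σ¹(s) = −s⁴/48 + O(s²)` as `s → ∞`. -/
theorem linear_correction_large_s (σ σ' σ'' y y' y'' : ℝ → ℝ)
    (hdσ1 : ∀ s ∈ Set.Ioi (0 : ℝ), HasDerivAt σ (σ' s) s)
    (hdσ2 : ∀ s ∈ Set.Ioi (0 : ℝ), HasDerivAt σ' (σ'' s) s)
    (hdy1 : ∀ s ∈ Set.Ioi (0 : ℝ), HasDerivAt y (y' s) s)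
    (hdy2 : ∀ s ∈ Set.Ioi (0 : ℝ), HasDerivAt y' (y'' s) s)
    (hσeq : ∀ s ∈ Set.Ioi (0 : ℝ),
      (s * σ'' s) ^ 2
        + 4 * (s * σ' s - σ s) * (s * σ' s - σ s + (σ' s) ^ 2) = 0)
    (hσ : (fun s => σ s + s ^ 2 / 4 + 1 / 4) =O[atTop] fun s : ℝ => 1 / s ^ 2)
    (hσ' : (fun s => σ' s + s / 2) =O[atTop] fun s : ℝ => 1 / s ^ 3)
    (hσ'' : (fun s => σ'' s + 1 / 2) =O[atTop] fun s : ℝ => 1 / s ^ 4)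
    (heq : ∀ s ∈ Set.Ioi (0 : ℝ),
      (2 * s ^ 2 * σ'' s) * y'' s
        + (-8 * σ' s * σ s + 12 * s * (σ' s) ^ 2 + 8 * s * (s * σ' s - σ s)) * y' s
        + (-4 * (σ' s) ^ 2 - 8 * (s * σ' s - σ s)) * y s
        = -(4 / 3) * s ^ 2 * σ'' s * (σ s - s * σ' s - (s ^ 2 / 2) * σ'' s)
          - (4 / 3) * (s * σ' s - σ s) *
              (3 * (σ s) ^ 2 + 2 * s * σ s * (s - σ' s)
                - 2 * s ^ 2 * σ' s * (s + σ' s)))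
    (hy : y =O[atTop] fun s : ℝ => s ^ 4)
    (hy' : y' =O[atTop] fun s : ℝ => s ^ 3)
    (hy'' : y'' =O[atTop] fun s : ℝ => s ^ 2) :
    (fun s => y s + s ^ 4 / 48) =O[atTop] fun s : ℝ => s ^ 2 := by
  have hone1 : (fun _ : ℝ => (1 : ℝ)) =O[atTop] fun _ : ℝ => (1 : ℝ) :=
    Asymptotics.isBigO_refl _ _
  have hone0 : (fun _ : ℝ => (1 : ℝ)) =O[atTop] fun s : ℝ => s ^ 0 := by
    simpa using Asymptotics.isBigO_refl (fun _ : ℝ => (1 : ℝ)) atTop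
  have hA : (fun s : ℝ => s ^ 2 * (σ s + s ^ 2 / 4 + 1 / 4)) =O[atTop]
      fun _ : ℝ => (1 : ℝ) := atomO 2 hσ
  have hB : (fun s : ℝ => s ^ 3 * (σ' s + s / 2)) =O[atTop]
      fun _ : ℝ => (1 : ℝ) := atomO 3 hσ'
  have hC : (fun s : ℝ => s ^ 4 * (σ'' s + 1 / 2)) =O[atTop]
      fun _ : ℝ => (1 : ℝ) := atomO 4 hσ''
  have hE : (fun s : ℝ =>
        ((2 : ℝ)) * (s ^ 10 * ((1 : ℝ) * y s))
        + ((-1 : ℝ)) * (s ^ 11 * ((1 : ℝ) * y' s))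
        + ((1 : ℝ)) * (s ^ 12 * ((1 : ℝ) * y'' s))
        + ((11 : ℝ) / 48) * (s ^ 14 * ((1 : ℝ) * (1 : ℝ)))
        + ((-8 : ℝ)) * (s ^ 8 * ((s ^ 2 * (σ s + s ^ 2 / 4 + 1 / 4)) * y s))
        + ((4 : ℝ)) * (s ^ 8 * ((s ^ 3 * (σ' s + s / 2)) * y s))
        + ((4 : ℝ)) * (s ^ 9 * ((s ^ 2 * (σ s + s ^ 2 / 4 + 1 / 4)) * y' s))
        + ((1 : ℝ) / 48) * (s ^ 12 * ((1 : ℝ) * (1 : ℝ)))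
        + ((2 : ℝ)) * (s ^ 9 * ((s ^ 3 * (σ' s + s / 2)) * y' s))
        + ((5 : ℝ) / 12) * (s ^ 12 * ((s ^ 2 * (σ s + s ^ 2 / 4 + 1 / 4)) * (1 : ℝ)))
        + ((1 : ℝ) / 4) * (s ^ 12 * ((s ^ 3 * (σ' s + s / 2)) * (1 : ℝ)))
        + ((-1 : ℝ) / 16) * (s ^ 10 * ((1 : ℝ) * (1 : ℝ)))
        + ((-2 : ℝ)) * (s ^ 7 * ((s ^ 3 * (σ' s + s / 2)) * y' s))
        + ((-2 : ℝ)) * (s ^ 8 * ((s ^ 4 * (σ'' s + 1 / 2)) * y'' s))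
        + ((-5 : ℝ) / 6) * (s ^ 10 * ((s ^ 2 * (σ s + s ^ 2 / 4 + 1 / 4)) * (1 : ℝ)))
        + ((-1 : ℝ) / 6) * (s ^ 10 * ((s ^ 3 * (σ' s + s / 2)) * (1 : ℝ)))
        + ((-1 : ℝ)) * (s ^ 10 * ((s ^ 4 * (σ'' s + 1 / 2)) * (1 : ℝ)))
        + ((4 : ℝ)) * (s ^ 4 * (((s ^ 3 * (σ' s + s / 2)) * (s ^ 3 * (σ' s + s / 2))) * y s))
        + ((3 : ℝ) / 4) * (s ^ 8 * ((s ^ 2 * (σ s + s ^ 2 / 4 + 1 / 4)) * (1 : ℝ)))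
        + ((8 : ℝ)) * (s ^ 5 * (((s ^ 2 * (σ s + s ^ 2 / 4 + 1 / 4)) * (s ^ 3 * (σ' s + s / 2))) * y' s))
        + ((-5 : ℝ) / 12) * (s ^ 8 * ((s ^ 3 * (σ' s + s / 2)) * (1 : ℝ)))
        + ((-12 : ℝ)) * (s ^ 5 * (((s ^ 3 * (σ' s + s / 2)) * (s ^ 3 * (σ' s + s / 2))) * y' s))
        + ((1 : ℝ) / 3) * (s ^ 8 * ((s ^ 4 * (σ'' s + 1 / 2)) * (1 : ℝ)))
        + ((3 : ℝ)) * (s ^ 8 * (((s ^ 2 * (σ s + s ^ 2 / 4 + 1 / 4)) * (s ^ 2 * (σ s + s ^ 2 / 4 + 1 / 4))) * (1 : ℝ)))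
        + ((-2 : ℝ)) * (s ^ 8 * (((s ^ 2 * (σ s + s ^ 2 / 4 + 1 / 4)) * (s ^ 3 * (σ' s + s / 2))) * (1 : ℝ)))
        + ((-4 : ℝ) / 3) * (s ^ 8 * (((s ^ 3 * (σ' s + s / 2)) * (s ^ 3 * (σ' s + s / 2))) * (1 : ℝ)))
        + ((-3 : ℝ)) * (s ^ 6 * (((s ^ 2 * (σ s + s ^ 2 / 4 + 1 / 4)) * (s ^ 2 * (σ s + s ^ 2 / 4 + 1 / 4))) * (1 : ℝ)))
        + ((10 : ℝ) / 3) * (s ^ 6 * (((s ^ 2 * (σ s + s ^ 2 / 4 + 1 / 4)) * (s ^ 3 * (σ' s + s / 2))) * (1 : ℝ)))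
        + ((-4 : ℝ) / 3) * (s ^ 6 * (((s ^ 2 * (σ s + s ^ 2 / 4 + 1 / 4)) * (s ^ 4 * (σ'' s + 1 / 2))) * (1 : ℝ)))
        + ((4 : ℝ) / 3) * (s ^ 6 * (((s ^ 3 * (σ' s + s / 2)) * (s ^ 4 * (σ'' s + 1 / 2))) * (1 : ℝ)))
        + ((2 : ℝ) / 3) * (s ^ 6 * (((s ^ 4 * (σ'' s + 1 / 2)) * (s ^ 4 * (σ'' s + 1 / 2))) * (1 : ℝ)))
        + ((4 : ℝ)) * (s ^ 4 * (((s ^ 2 * (σ s + s ^ 2 / 4 + 1 / 4)) * ((s ^ 2 * (σ s + s ^ 2 / 4 + 1 / 4)) * (s ^ 2 * (σ s + s ^ 2 / 4 + 1 / 4)))) * (1 : ℝ)))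
        + ((-20 : ℝ) / 3) * (s ^ 4 * (((s ^ 2 * (σ s + s ^ 2 / 4 + 1 / 4)) * ((s ^ 2 * (σ s + s ^ 2 / 4 + 1 / 4)) * (s ^ 3 * (σ' s + s / 2)))) * (1 : ℝ)))
        + ((8 : ℝ) / 3) * (s ^ 4 * (((s ^ 3 * (σ' s + s / 2)) * ((s ^ 3 * (σ' s + s / 2)) * (s ^ 3 * (σ' s + s / 2)))) * (1 : ℝ))))
      =O[atTop] fun s : ℝ => s ^ 14 :=
    (((((((((((((((((((((((((((((((((termO ((2 : ℝ)) hone1 hy (by norm_num)).add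
      (termO ((-1 : ℝ)) hone1 hy' (by norm_num))).add
      (termO ((1 : ℝ)) hone1 hy'' (by norm_num))).add
      (termO ((11 : ℝ) / 48) hone1 hone0 (by norm_num))).add
      (termO ((-8 : ℝ)) hA hy (by norm_num))).add
      (termO ((4 : ℝ)) hB hy (by norm_num))).add
      (termO ((4 : ℝ)) hA hy' (by norm_num))).add
      (termO ((1 : ℝ) / 48) hone1 hone0 (by norm_num))).add
      (termO ((2 : ℝ)) hB hy' (by norm_num))).add
      (termO ((5 : ℝ) / 12) hA hone0 (by norm_num))).add
      (termO ((1 : ℝ) / 4) hB hone0 (by norm_num))).add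
      (termO ((-1 : ℝ) / 16) hone1 hone0 (by norm_num))).add
      (termO ((-2 : ℝ)) hB hy' (by norm_num))).add
      (termO ((-2 : ℝ)) hC hy'' (by norm_num))).add
      (termO ((-5 : ℝ) / 6) hA hone0 (by norm_num))).add
      (termO ((-1 : ℝ) / 6) hB hone0 (by norm_num))).add
      (termO ((-1 : ℝ)) hC hone0 (by norm_num))).add
      (termO ((4 : ℝ)) (mulO1 hB hB) hy (by norm_num))).add
      (termO ((3 : ℝ) / 4) hA hone0 (by norm_num))).add
      (termO ((8 : ℝ)) (mulO1 hA hB) hy' (by norm_num))).add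
      (termO ((-5 : ℝ) / 12) hB hone0 (by norm_num))).add
      (termO ((-12 : ℝ)) (mulO1 hB hB) hy' (by norm_num))).add
      (termO ((1 : ℝ) / 3) hC hone0 (by norm_num))).add
      (termO ((3 : ℝ)) (mulO1 hA hA) hone0 (by norm_num))).add
      (termO ((-2 : ℝ)) (mulO1 hA hB) hone0 (by norm_num))).add
      (termO ((-4 : ℝ) / 3) (mulO1 hB hB) hone0 (by norm_num))).add
      (termO ((-3 : ℝ)) (mulO1 hA hA) hone0 (by norm_num))).add
      (termO ((10 : ℝ) / 3) (mulO1 hA hB) hone0 (by norm_num))).add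
      (termO ((-4 : ℝ) / 3) (mulO1 hA hC) hone0 (by norm_num))).add
      (termO ((4 : ℝ) / 3) (mulO1 hB hC) hone0 (by norm_num))).add
      (termO ((2 : ℝ) / 3) (mulO1 hC hC) hone0 (by norm_num))).add
      (termO ((4 : ℝ)) (mulO1 hA (mulO1 hA hA)) hone0 (by norm_num))).add
      (termO ((-20 : ℝ) / 3) (mulO1 hA (mulO1 hA hB)) hone0 (by norm_num))).add
      (termO ((8 : ℝ) / 3) (mulO1 hB (mulO1 hB hB)) hone0 (by norm_num))
  have hfe : (fun s : ℝ => s ^ 12 * (y s + s ^ 4 / 48)) =ᶠ[atTop] (fun s : ℝ =>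
        ((2 : ℝ)) * (s ^ 10 * ((1 : ℝ) * y s))
        + ((-1 : ℝ)) * (s ^ 11 * ((1 : ℝ) * y' s))
        + ((1 : ℝ)) * (s ^ 12 * ((1 : ℝ) * y'' s))
        + ((11 : ℝ) / 48) * (s ^ 14 * ((1 : ℝ) * (1 : ℝ)))
        + ((-8 : ℝ)) * (s ^ 8 * ((s ^ 2 * (σ s + s ^ 2 / 4 + 1 / 4)) * y s))
        + ((4 : ℝ)) * (s ^ 8 * ((s ^ 3 * (σ' s + s / 2)) * y s))
        + ((4 : ℝ)) * (s ^ 9 * ((s ^ 2 * (σ s + s ^ 2 / 4 + 1 / 4)) * y' s))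
        + ((1 : ℝ) / 48) * (s ^ 12 * ((1 : ℝ) * (1 : ℝ)))
        + ((2 : ℝ)) * (s ^ 9 * ((s ^ 3 * (σ' s + s / 2)) * y' s))
        + ((5 : ℝ) / 12) * (s ^ 12 * ((s ^ 2 * (σ s + s ^ 2 / 4 + 1 / 4)) * (1 : ℝ)))
        + ((1 : ℝ) / 4) * (s ^ 12 * ((s ^ 3 * (σ' s + s / 2)) * (1 : ℝ)))
        + ((-1 : ℝ) / 16) * (s ^ 10 * ((1 : ℝ) * (1 : ℝ)))
        + ((-2 : ℝ)) * (s ^ 7 * ((s ^ 3 * (σ' s + s / 2)) * y' s))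
        + ((-2 : ℝ)) * (s ^ 8 * ((s ^ 4 * (σ'' s + 1 / 2)) * y'' s))
        + ((-5 : ℝ) / 6) * (s ^ 10 * ((s ^ 2 * (σ s + s ^ 2 / 4 + 1 / 4)) * (1 : ℝ)))
        + ((-1 : ℝ) / 6) * (s ^ 10 * ((s ^ 3 * (σ' s + s / 2)) * (1 : ℝ)))
        + ((-1 : ℝ)) * (s ^ 10 * ((s ^ 4 * (σ'' s + 1 / 2)) * (1 : ℝ)))
        + ((4 : ℝ)) * (s ^ 4 * (((s ^ 3 * (σ' s + s / 2)) * (s ^ 3 * (σ' s + s / 2))) * y s))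
        + ((3 : ℝ) / 4) * (s ^ 8 * ((s ^ 2 * (σ s + s ^ 2 / 4 + 1 / 4)) * (1 : ℝ)))
        + ((8 : ℝ)) * (s ^ 5 * (((s ^ 2 * (σ s + s ^ 2 / 4 + 1 / 4)) * (s ^ 3 * (σ' s + s / 2))) * y' s))
        + ((-5 : ℝ) / 12) * (s ^ 8 * ((s ^ 3 * (σ' s + s / 2)) * (1 : ℝ)))
        + ((-12 : ℝ)) * (s ^ 5 * (((s ^ 3 * (σ' s + s / 2)) * (s ^ 3 * (σ' s + s / 2))) * y' s))
        + ((1 : ℝ) / 3) * (s ^ 8 * ((s ^ 4 * (σ'' s + 1 / 2)) * (1 : ℝ)))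
        + ((3 : ℝ)) * (s ^ 8 * (((s ^ 2 * (σ s + s ^ 2 / 4 + 1 / 4)) * (s ^ 2 * (σ s + s ^ 2 / 4 + 1 / 4))) * (1 : ℝ)))
        + ((-2 : ℝ)) * (s ^ 8 * (((s ^ 2 * (σ s + s ^ 2 / 4 + 1 / 4)) * (s ^ 3 * (σ' s + s / 2))) * (1 : ℝ)))
        + ((-4 : ℝ) / 3) * (s ^ 8 * (((s ^ 3 * (σ' s + s / 2)) * (s ^ 3 * (σ' s + s / 2))) * (1 : ℝ)))
        + ((-3 : ℝ)) * (s ^ 6 * (((s ^ 2 * (σ s + s ^ 2 / 4 + 1 / 4)) * (s ^ 2 * (σ s + s ^ 2 / 4 + 1 / 4))) * (1 : ℝ)))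
        + ((10 : ℝ) / 3) * (s ^ 6 * (((s ^ 2 * (σ s + s ^ 2 / 4 + 1 / 4)) * (s ^ 3 * (σ' s + s / 2))) * (1 : ℝ)))
        + ((-4 : ℝ) / 3) * (s ^ 6 * (((s ^ 2 * (σ s + s ^ 2 / 4 + 1 / 4)) * (s ^ 4 * (σ'' s + 1 / 2))) * (1 : ℝ)))
        + ((4 : ℝ) / 3) * (s ^ 6 * (((s ^ 3 * (σ' s + s / 2)) * (s ^ 4 * (σ'' s + 1 / 2))) * (1 : ℝ)))
        + ((2 : ℝ) / 3) * (s ^ 6 * (((s ^ 4 * (σ'' s + 1 / 2)) * (s ^ 4 * (σ'' s + 1 / 2))) * (1 : ℝ)))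
        + ((4 : ℝ)) * (s ^ 4 * (((s ^ 2 * (σ s + s ^ 2 / 4 + 1 / 4)) * ((s ^ 2 * (σ s + s ^ 2 / 4 + 1 / 4)) * (s ^ 2 * (σ s + s ^ 2 / 4 + 1 / 4)))) * (1 : ℝ)))
        + ((-20 : ℝ) / 3) * (s ^ 4 * (((s ^ 2 * (σ s + s ^ 2 / 4 + 1 / 4)) * ((s ^ 2 * (σ s + s ^ 2 / 4 + 1 / 4)) * (s ^ 3 * (σ' s + s / 2)))) * (1 : ℝ)))
        + ((8 : ℝ) / 3) * (s ^ 4 * (((s ^ 3 * (σ' s + s / 2)) * ((s ^ 3 * (σ' s + s / 2)) * (s ^ 3 * (σ' s + s / 2)))) * (1 : ℝ)))) := by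
    filter_upwards [Filter.eventually_gt_atTop (0 : ℝ)] with s hs
    have h := heq s (Set.mem_Ioi.mpr hs)
    linear_combination s ^ 10 * h
  exact divO _ 12 2 (hfe.trans_isBigO hE)
end

section
/- For 0 < ξ < 1 with k = −(1/π)log(1−ξ), substituting σ⁰(s) = −ks + k²/2 (exactly) into the right-hand side D(s) and coefficients A, B, C of the linear ODE of Proposition 1 and seeking a solution of the form y(s) = cs² + O(s), leading-order matching as s → ∞ forces c = −k²/6. -/
open Real Filter Asymptotics
open scoped Topology

/-- For `0 < ξ < 1` and `k = −(1/π)log(1−ξ)`, substitute `σ(s) = −ks + k²/2` exactly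
(so `σ' = −k`, `σ'' = 0`) into the coefficients `A, B, C` and right-hand side `D` of the
linear ODE of Proposition 1.  If `y(s) = cs² + O(s)` (with `y' = 2cs + O(1)`,
`y'' = O(1)`) solves the equation to leading order as `s → ∞` (residual `o(s)`), then
leading-order matching forces `c = −k²/6`. -/
theorem linear_correction_thinned_large_s (ξ : ℝ) (hξ0 : 0 < ξ) (hξ1 : ξ < 1)
    (k : ℝ) (hk : k = -(1 / Real.pi) * Real.log (1 - ξ)) (c : ℝ)
    (σ : ℝ → ℝ) (hσ : ∀ s : ℝ, σ s = -k * s + k ^ 2 / 2)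
    (y y' y'' : ℝ → ℝ)
    (hd1 : ∀ s : ℝ, HasDerivAt y (y' s) s)
    (hd2 : ∀ s : ℝ, HasDerivAt y' (y'' s) s)
    (hy : (fun s => y s - c * s ^ 2) =O[atTop] (fun s : ℝ => s))
    (hy' : (fun s => y' s - 2 * c * s) =O[atTop] (fun _ : ℝ => (1 : ℝ)))
    (hy'' : y'' =O[atTop] (fun _ : ℝ => (1 : ℝ)))
    (heq : (fun s : ℝ =>
        (2 * s ^ 2 * (0 : ℝ)) * y'' s
          + (-8 * (-k) * σ s + 12 * s * (-k) ^ 2 + 8 * s * (s * (-k) - σ s)) * y' s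
          + (-4 * (-k) ^ 2 - 8 * (s * (-k) - σ s)) * y s
          - (-(4 / 3) * s ^ 2 * (0 : ℝ) * (σ s - s * (-k) - (s ^ 2 / 2) * (0 : ℝ))
              - (4 / 3) * (s * (-k) - σ s) *
                  (3 * (σ s) ^ 2 + 2 * s * σ s * (s - (-k))
                    - 2 * s ^ 2 * (-k) * (s + (-k)))))
      =o[atTop] (fun s : ℝ => s)) :
    c = -k ^ 2 / 6 := by

  have hπ : 0 < Real.pi := Real.pi_pos
  have hlog : Real.log (1 - ξ) < 0 :=
    Real.log_neg (by linarith) (by linarith)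
  have hk0 : 0 < k := by
    rw [hk]
    have : 0 < 1 / Real.pi := by positivity
    nlinarith
  have hk3 : k ^ 3 ≠ 0 := by positivity
  -- rewrite the residual in closed form
  have hfun : (fun s : ℝ =>
        (2 * s ^ 2 * (0 : ℝ)) * y'' s
          + (-8 * (-k) * σ s + 12 * s * (-k) ^ 2 + 8 * s * (s * (-k) - σ s)) * y' s
          + (-4 * (-k) ^ 2 - 8 * (s * (-k) - σ s)) * y s
          - (-(4 / 3) * s ^ 2 * (0 : ℝ) * (σ s - s * (-k) - (s ^ 2 / 2) * (0 : ℝ))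
              - (4 / 3) * (s * (-k) - σ s) *
                  (3 * (σ s) ^ 2 + 2 * s * σ s * (s - (-k))
                    - 2 * s ^ 2 * (-k) * (s + (-k)))))
      = fun s : ℝ =>
          (8 * c * k ^ 3 + 4 * k ^ 5 / 3) * s
            + (4 * k ^ 3 * (y' s - 2 * c * s) - k ^ 6 / 2) := by
    funext s
    rw [hσ s]
    ring
  rw [hfun] at heq
  have h1 : (fun _ : ℝ => (1 : ℝ)) =o[atTop] (fun s : ℝ => s) :=
    isLittleO_const_id_atTop (1 : ℝ)
  have hrem : (fun s : ℝ => 4 * k ^ 3 * (y' s - 2 * c * s) - k ^ 6 / 2)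
      =o[atTop] (fun s : ℝ => s) := by
    have h2 : (fun s : ℝ => 4 * k ^ 3 * (y' s - 2 * c * s))
        =O[atTop] (fun _ : ℝ => (1 : ℝ)) := (hy'.const_mul_left _)
    have h3 : (fun _ : ℝ => k ^ 6 / 2) =O[atTop] (fun _ : ℝ => (1 : ℝ)) :=
      isBigO_const_const _ one_ne_zero _
    exact (h2.sub h3).trans_isLittleO h1
  have key : (fun s : ℝ => (8 * c * k ^ 3 + 4 * k ^ 5 / 3) * s)
      =o[atTop] (fun s : ℝ => s) := by
    have := heq.sub hrem
    simpa using this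
  have hK : 8 * c * k ^ 3 + 4 * k ^ 5 / 3 = 0 := by
    by_contra hK
    have : (fun s : ℝ => s) =o[atTop] (fun s : ℝ => s) :=
      (isLittleO_const_mul_left_iff hK).mp key
    exact (isLittleO_irrefl
      (((eventually_gt_atTop (0 : ℝ)).mono fun s hs => hs.ne').frequently)) this
  have hkk : k ≠ 0 := hk0.ne'
  field_simp at hK ⊢
  nlinarith [pow_pos hk0 3, sq_nonneg k]
end
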